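/- arXiv:1205.6422 — 2 statements merged into one kernel-verified Lean document; each statement's English description precedes it below -/
import Mathlib

section
/- Let X be a locally pseudocompact Tychonoff space, let K be a compactification of X, and let φ : βX → K be the continuous extension of the identity map of X. Then φ[ζX] is the smallest (with respect to set inclusion) pseudocompactification of X with compact remainder contained in K; that is, φ[ζX] is a pseudocompactification of X with compact remainder, and every pseudocompactification Y ⊆ K of X with compact remainder satisfies φ[ζX] ⊆ Y. -/
open Set Topology

/-- A zero-set: the preimage of `{0}` under a continuous real-valued function. -/
def IsZeroSet {Y : Type*} [TopologicalSpace Y] (Z : Set Y) : Prop :=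
  ∃ f : C(Y, ℝ), Z = f ⁻¹' {0}

/-- A cozero-set: the complement of a zero-set. -/
def IsCozeroSet {Y : Type*} [TopologicalSpace Y] (C : Set Y) : Prop :=
  IsZeroSet Cᶜ

/-- A space is pseudocompact if every continuous real-valued function on it is bounded. -/
def IsPseudocompact (Y : Type*) [TopologicalSpace Y] : Prop :=
  ∀ f : C(Y, ℝ), ∃ M : ℝ, ∀ y, |f y| ≤ M

/-- A subset is pseudocompact if it is pseudocompact as a subspace. -/
def IsPseudocompactSet {Y : Type*} [TopologicalSpace Y] (A : Set Y) : Prop :=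
  ∀ f : C(A, ℝ), ∃ M : ℝ, ∀ a, |f a| ≤ M

/-- The Hewitt realcompactification `υX`, realized as the subspace of `βX` consisting of
those `p ∈ βX` such that every zero-set of `βX` containing `p` meets `X`. -/
def upsilonSet (X : Type*) [TopologicalSpace X] : Set (StoneCech X) :=
  {p | ∀ Z : Set (StoneCech X), IsZeroSet Z → p ∈ Z →
    (Z ∩ Set.range (stoneCechUnit : X → StoneCech X)).Nonempty}

/-- `ζX = X ∪ cl_{βX}(βX \ υX)`, as a subset of `βX`. -/
def zetaSet (X : Type*) [TopologicalSpace X] : Set (StoneCech X) :=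
  Set.range (stoneCechUnit : X → StoneCech X) ∪ closure (upsilonSet X)ᶜ

/-!
Every point of `X` has a neighbourhood with pseudocompact closure, and the `βX`-closure of a
pseudocompact subset of `X` stays inside `υX`; hence `φ` maps `cl(βX \ υX)` off `X`, and the
remainder of `φ[ζX]` is the compact set `φ[cl(βX \ υX)]`.

`ζX` is pseudocompact: for continuous `f` on `ζX`, the function `1 / (1 + |f|)` extends from `X`
to `βX`, and the extension has no zero, since a zero would lie in a zero-set missing `X`, hence
outside `υX`, hence in `ζX`, where the extension is `1 / (1 + |f|) > 0`.

For minimality, suppose `p ∉ υX` but `φ p ∉ Y`. Shrinking a zero-set through `p` that misses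
`X` gives a zero-set `Z(g)` through `p` whose `φ`-image misses `Y`. The open sets of `K` tracing
`{|g| < 1/(n+1)}` on `X` then meet `Y` and form a locally finite family on `Y`, and a
pseudocompact space carries no infinite such family.
-/

section Pseudocompact

variable {T : Type*} [TopologicalSpace T]

theorem IsPseudocompactSet.image {T' : Type*} [TopologicalSpace T'] {A : Set T}
    (hA : IsPseudocompactSet A) {φ : T → T'} (hφ : Continuous φ) :
    IsPseudocompactSet (φ '' A) := by
  intro f
  obtain ⟨M, hM⟩ := hA (f.comp ⟨_, hφ.restrict (mapsTo_image φ A)⟩)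
  exact ⟨M, fun ⟨_, a, ha, rfl⟩ => hM ⟨a, ha⟩⟩

theorem IsPseudocompactSet.exists_pos_le_abs {A : Set T} (hA : IsPseudocompactSet A)
    (f : C(T, ℝ)) (hf : ∀ a ∈ A, f a ≠ 0) : ∃ c > 0, ∀ a ∈ A, c ≤ |f a| := by
  obtain ⟨M, hM⟩ := hA ⟨fun a => (f a)⁻¹, (f.continuous.comp continuous_subtype_val).inv₀
    fun a => hf a a.2⟩
  refine ⟨(|M| + 1)⁻¹, by positivity, fun a ha => ?_⟩
  have hfa : |f a|⁻¹ ≤ M := abs_inv (f a) ▸ hM ⟨a, ha⟩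
  exact (inv_le_comm₀ (abs_pos.2 (hf a ha)) (by positivity)).1
    (hfa.trans (by linarith [le_abs_self M]))

theorem IsPseudocompactSet.finite_of_locallyFinite [CompletelyRegularSpace T] {ι : Type*}
    {Y : Set T} (hY : IsPseudocompactSet Y) {V : ι → Set T} (hV : ∀ i, IsOpen (V i))
    (hVY : ∀ i, (V i ∩ Y).Nonempty) (hlf : LocallyFinite fun i => ((↑) ⁻¹' V i : Set Y)) :
    Finite ι := by
  by_contra hfin
  have : Infinite ι := not_finite_iff_infinite.1 hfin
  let e := Infinite.natEmbedding ι
  choose y hyV hyY using fun n => hVY (e n)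
  choose b hb hby hbV using fun n => CompletelyRegularSpace.completely_regular (y n) (V (e n))ᶜ
    (hV (e n)).isClosed_compl (not_not.2 (hyV n))
  let F : ℕ → Y → ℝ := fun n z => n * (1 - b n z)
  have hF_nonneg : ∀ n z, 0 ≤ F n z := fun n z =>
    mul_nonneg n.cast_nonneg (sub_nonneg.2 (b n z).2.2)
  have hF_support : ∀ n, Function.support (F n) ⊆ (↑) ⁻¹' V (e n) := by
    intro n z hz
    by_contra hzV
    exact hz (by simp [F, hbV n hzV])
  have hlfF : LocallyFinite fun n => Function.support (F n) :=
    (hlf.comp_injective e.injective).subset hF_support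
  obtain ⟨M, hM⟩ : ∃ M, ∀ z, |∑ᶠ n, F n z| ≤ M :=
    hY ⟨fun z => ∑ᶠ n, F n z, continuous_finsum (fun n => by fun_prop) hlfF⟩
  obtain ⟨n, hn⟩ := exists_nat_gt M
  have hFn : (n : ℝ) ≤ ∑ᶠ m, F m ⟨y n, hyY n⟩ :=
    calc (n : ℝ) = F n ⟨y n, hyY n⟩ := by simp [F, hby n]
      _ ≤ _ := single_le_finsum n (hlfF.point_finite _) fun m => hF_nonneg m _
  linarith [le_abs_self (∑ᶠ m, F m ⟨y n, hyY n⟩), hM ⟨y n, hyY n⟩]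

end Pseudocompact

theorem IsCompact.exists_one_div_lt_abs {B : Type*} [TopologicalSpace B] {S : Set B}
    (hS : IsCompact S) {g : B → ℝ} (hg : Continuous g) (h0 : ∀ t ∈ S, g t ≠ 0) :
    ∃ N : ℕ, ∀ t ∈ S, 1 / ((N : ℝ) + 1) < |g t| := by
  rcases S.eq_empty_or_nonempty with rfl | hne
  · exact ⟨0, by simp⟩
  obtain ⟨t₀, ht₀, hmin⟩ := hS.exists_isMinOn hne hg.abs.continuousOn
  obtain ⟨N, hN⟩ := exists_nat_one_div_lt (abs_pos.2 (h0 t₀ ht₀))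
  exact ⟨N, fun t ht => hN.trans_le (hmin ht)⟩

section StoneCech

variable {X : Type*} [TopologicalSpace X]

theorem notMem_upsilonSet_of_eq_zero {g : C(StoneCech X, ℝ)}
    (hg : ∀ x, g (stoneCechUnit x) ≠ 0) {t : StoneCech X} (ht : g t = 0) :
    t ∉ upsilonSet X := fun hυ =>
  let ⟨_, hz, x, hx⟩ := hυ _ ⟨g, rfl⟩ ht
  hg x (hx ▸ hz)

theorem closure_image_stoneCechUnit_subset_upsilonSet {P : Set X}
    (hP : IsPseudocompactSet P) : closure (stoneCechUnit '' P) ⊆ upsilonSet X := by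
  rintro q hq _ ⟨F, rfl⟩ hqF
  by_contra hFX
  obtain ⟨c, hc, hcF⟩ := hP.exists_pos_le_abs (F.comp ⟨_, continuous_stoneCechUnit⟩)
    fun x _ hx => hFX ⟨_, hx, x, rfl⟩
  have hcl : closure (stoneCechUnit '' P) ⊆ {t | c ≤ |F t|} :=
    closure_minimal (by rintro _ ⟨x, hx, rfl⟩; exact hcF x hx)
      (isClosed_le continuous_const (by fun_prop))
  have hFq : F q = 0 := hqF
  exact (hc.trans_le (by simpa [hFq] using hcl hq)).false

theorem isPseudocompactSet_of_compl_upsilonSet_subset {S : Set (StoneCech X)}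
    (hXS : range (stoneCechUnit : X → StoneCech X) ⊆ S) (hυS : (upsilonSet X)ᶜ ⊆ S) :
    IsPseudocompactSet S := by
  intro f
  let ι : X → S := codRestrict stoneCechUnit S fun x => hXS ⟨x, rfl⟩
  have hι : DenseRange ι := by
    rw [DenseRange, Subtype.dense_iff, ← range_comp]
    exact (denseRange_stoneCechUnit (α := X)).closure_range ▸ subset_univ _
  have h_one_le : ∀ s, 1 ≤ 1 + |f s| := fun s => le_add_of_nonneg_right (abs_nonneg _)
  let w : S → ℝ := fun s => (1 + |f s|)⁻¹
  have hw_pos : ∀ s, 0 < w s := fun s => inv_pos.2 (zero_lt_one.trans_le (h_one_le s))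
  let c : S → unitInterval := fun s =>
    ⟨w s, (hw_pos s).le, inv_le_one_of_one_le₀ (h_one_le s)⟩
  have hc : Continuous c := ((continuous_const.add f.continuous.abs).inv₀
    fun s => (zero_lt_one.trans_le (h_one_le s)).ne').subtype_mk _
  have hcι : Continuous (c ∘ ι) := hc.comp (continuous_stoneCechUnit.codRestrict _)
  let G : StoneCech X → ℝ := fun t => ((stoneCechExtend hcι t : unitInterval) : ℝ)
  have hGc : Continuous G := continuous_subtype_val.comp (continuous_stoneCechExtend hcι)
  have hGX : ∀ x, G (stoneCechUnit x) = w (ι x) := fun x =>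
    congrArg Subtype.val (congrFun (stoneCechExtend_extends hcι) x)
  have hGS : ∀ s : S, G s = w s := by
    have := hι.equalizer ((continuous_stoneCechExtend hcι).comp continuous_subtype_val) hc
      (stoneCechExtend_extends hcι)
    exact fun s => congrArg Subtype.val (congrFun this s)
  have hG0 : ∀ t, G t ≠ 0 := by
    intro t ht
    have htS : t ∈ S := hυS (notMem_upsilonSet_of_eq_zero (g := ⟨G, hGc⟩)
      (fun x => (hGX x).trans_ne (hw_pos _).ne') ht)
    exact (hw_pos ⟨t, htS⟩).ne' (hGS ⟨t, htS⟩ ▸ ht)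
  obtain ⟨C, hC⟩ := isCompact_univ.exists_bound_of_continuousOn (hGc.inv₀ hG0).continuousOn
  refine ⟨C, fun s => ?_⟩
  calc |f s| ≤ 1 + |f s| := le_add_of_nonneg_left zero_le_one
    _ = (G s)⁻¹ := by rw [hGS, inv_inv]
    _ ≤ C := (le_abs_self _).trans (hC s (mem_univ _))

variable {K : Type*} [TopologicalSpace K] {k : X → K} {φ : StoneCech X → K}

theorem mapsTo_closure_compl_upsilonSet
    (hlp : ∀ x : X, ∃ U : Set X, IsOpen U ∧ x ∈ U ∧ IsPseudocompactSet (closure U))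
    (hk : IsEmbedding k) (hφ : Continuous φ) (hφk : ∀ x, φ (stoneCechUnit x) = k x) :
    MapsTo φ (closure (upsilonSet X)ᶜ) (range k)ᶜ := by
  rintro t ht ⟨x, hx⟩
  obtain ⟨U, hUo, hxU, hU⟩ := hlp x
  -- `W` is open in `K` and traces on `X` an open set inside `closure U`
  let W := (closure (k '' (closure U)ᶜ))ᶜ
  have hWo : IsOpen (φ ⁻¹' W) := isClosed_closure.isOpen_compl.preimage hφ
  have hxW : k x ∈ W := by
    rw [mem_compl_iff, ← mem_preimage, ← hk.closure_eq_preimage_closure_image, closure_compl]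
    exact not_not.2 (interior_maximal subset_closure hUo hxU)
  have hWυ : φ ⁻¹' W ⊆ upsilonSet X := by
    refine (denseRange_stoneCechUnit.open_subset_closure_inter hWo).trans
      ((closure_mono ?_).trans (closure_image_stoneCechUnit_subset_upsilonSet hU))
    rintro _ ⟨htW, x', rfl⟩
    refine ⟨x', not_not.1 fun hx' => htW ?_, rfl⟩
    rw [hφk]
    exact subset_closure ⟨x', hx', rfl⟩
  rw [closure_compl] at ht
  exact ht (interior_maximal hWυ hWo (by rw [mem_preimage, ← hx]; exact hxW))

theorem image_zetaSet_diff_range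
    (hlp : ∀ x : X, ∃ U : Set X, IsOpen U ∧ x ∈ U ∧ IsPseudocompactSet (closure U))
    (hk : IsEmbedding k) (hφ : Continuous φ) (hφk : ∀ x, φ (stoneCechUnit x) = k x) :
    φ '' zetaSet X \ range k = φ '' closure (upsilonSet X)ᶜ := by
  have hφu : φ ∘ stoneCechUnit = k := funext hφk
  rw [zetaSet, image_union, ← range_comp, hφu, union_sdiff_left, sdiff_eq_left,
    ← subset_compl_iff_disjoint_right]
  exact (mapsTo_closure_compl_upsilonSet hlp hk hφ hφk).image_subset

variable [T2Space K] [CompletelyRegularSpace K]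

theorem exists_zero_mem_preimage_of_isPseudocompactSet (hk : IsEmbedding k) (hkd : DenseRange k)
    (hφ : Continuous φ) (hφk : ∀ x, φ (stoneCechUnit x) = k x) {Y : Set K}
    (hXY : range k ⊆ Y) (hY : IsPseudocompactSet Y) {g : C(StoneCech X, ℝ)}
    {p : StoneCech X} (hp : g p = 0) : ∃ t, g t = 0 ∧ φ t ∈ Y := by
  by_contra! hZY
  let D : ℕ → Set K := fun n => φ '' {t | |g t| ≤ 1 / ((n : ℝ) + 1)}
  have hD_closed : ∀ n, IsClosed (D n) := fun n =>
    ((isClosed_le (by fun_prop) continuous_const).isCompact.image hφ).isClosed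
  have hD_anti : Antitone D := fun m n hmn =>
    image_mono fun t (ht : |g t| ≤ _) => ht.trans (Nat.one_div_le_one_div hmn)
  have hY_escape : ∀ q ∈ Y, ∃ N, q ∉ D N := by
    intro q hq
    obtain ⟨N, hN⟩ := (isClosed_singleton.preimage hφ).isCompact.exists_one_div_lt_abs
      g.continuous fun t ht h0 => hZY t h0 (ht ▸ hq)
    exact ⟨N, fun ⟨t, ht, htq⟩ => (hN t htq).not_ge ht⟩
  have hsmall_open : ∀ n : ℕ, IsOpen {t | |g t| < 1 / ((n : ℝ) + 1)} := fun n =>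
    isOpen_lt (by fun_prop) continuous_const
  have hV : ∀ n : ℕ, ∃ V : Set K, IsOpen V ∧
      k ⁻¹' V = stoneCechUnit ⁻¹' {t | |g t| < 1 / ((n : ℝ) + 1)} := fun n =>
    hk.isInducing.isOpen_iff.1 ((hsmall_open n).preimage continuous_stoneCechUnit)
  choose V hVo hVk using hV
  have hVD : ∀ n, V n ⊆ D n := by
    intro n
    refine (hkd.open_subset_closure_inter (hVo n)).trans (closure_minimal ?_ (hD_closed n))
    rintro _ ⟨hxV, x, rfl⟩
    have hx : x ∈ k ⁻¹' V n := hxV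
    rw [hVk] at hx
    exact ⟨stoneCechUnit x, le_of_lt (show |g (stoneCechUnit x)| < _ from hx), hφk x⟩
  have hVY : ∀ n, (V n ∩ Y).Nonempty := by
    intro n
    obtain ⟨x, hx⟩ := denseRange_stoneCechUnit.exists_mem_open (hsmall_open n)
      ⟨p, show |g p| < 1 / ((n : ℝ) + 1) by rw [hp, abs_zero]; positivity⟩
    exact ⟨k x, show x ∈ k ⁻¹' V n by rw [hVk]; exact hx, hXY ⟨x, rfl⟩⟩
  have hlf : LocallyFinite fun n => ((↑) ⁻¹' V n : Set Y) := by
    intro q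
    obtain ⟨N, hN⟩ := hY_escape q q.2
    have hN_nhds : ((↑) ⁻¹' (D N)ᶜ : Set Y) ∈ 𝓝 q :=
      ((hD_closed N).isOpen_compl.preimage continuous_subtype_val).mem_nhds hN
    refine ⟨_, hN_nhds, (finite_lt_nat N).subset fun n ⟨z, hzV, hzD⟩ => ?_⟩
    by_contra hn
    exact hzD (hD_anti (not_lt.1 hn) (hVD n hzV))
  exact not_finite_iff_infinite.2 inferInstance (hY.finite_of_locallyFinite hVo hVY hlf)

theorem mapsTo_closure_compl_upsilonSet_diff_range
    (hlp : ∀ x : X, ∃ U : Set X, IsOpen U ∧ x ∈ U ∧ IsPseudocompactSet (closure U))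
    (hk : IsEmbedding k) (hkd : DenseRange k) (hφ : Continuous φ)
    (hφk : ∀ x, φ (stoneCechUnit x) = k x) {Y : Set K} (hXY : range k ⊆ Y)
    (hY : IsPseudocompactSet Y) (hYc : IsClosed (Y \ range k)) :
    MapsTo φ (closure (upsilonSet X)ᶜ) (Y \ range k) := by
  have hmaps := mapsTo_closure_compl_upsilonSet hlp hk hφ hφk
  suffices ∀ p ∉ upsilonSet X, φ p ∈ Y from
    closure_minimal (fun p hp => ⟨this p hp, hmaps (subset_closure hp)⟩) (hYc.preimage hφ)
  intro p hp
  obtain ⟨_, ⟨g, rfl⟩, hgp, hgX⟩ : ∃ Z, IsZeroSet Z ∧ p ∈ Z ∧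
      ¬(Z ∩ range stoneCechUnit).Nonempty := by
    simpa [upsilonSet] using hp
  by_contra hpY
  obtain ⟨h, hh, h0, h1⟩ := CompletelyRegularSpace.completely_regular (φ p) _ hYc
    fun hp' => hpY hp'.1
  -- `Z(G) ⊆ Z(g)` still contains `p`, and its `φ`-image misses `Y`
  let G : C(StoneCech X, ℝ) := ⟨fun t => |g t| + h (φ t), by fun_prop⟩
  have hGp : G p = 0 := by simp [G, show g p = 0 from hgp, h0]
  obtain ⟨t, hGt, htY⟩ :=
    exists_zero_mem_preimage_of_isPseudocompactSet hk hkd hφ hφk hXY hY hGp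
  obtain ⟨hgt, hht⟩ := (add_eq_zero_iff_of_nonneg (abs_nonneg _) (h (φ t)).2.1).1 hGt
  have htυ : t ∉ upsilonSet X :=
    notMem_upsilonSet_of_eq_zero (fun x hx => hgX ⟨_, hx, x, rfl⟩) (abs_eq_zero.1 hgt)
  simp [h1 ⟨htY, hmaps (subset_closure htυ)⟩] at hht

end StoneCech

theorem image_zetaSet_smallest_general (X K : Type*) [TopologicalSpace X]
    [TopologicalSpace K] [CompactSpace K] [T2Space K]
    (hlp : ∀ x : X, ∃ U : Set X, IsOpen U ∧ x ∈ U ∧ IsPseudocompactSet (closure U))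
    (k : X → K) (hk : IsEmbedding k) (hkd : DenseRange k)
    (φ : StoneCech X → K) (hφ : Continuous φ)
    (hφk : ∀ x : X, φ (stoneCechUnit x) = k x) :
    Set.range k ⊆ φ '' zetaSet X ∧
    φ '' zetaSet X ⊆ closure (Set.range k) ∧
    IsPseudocompactSet (φ '' zetaSet X) ∧
    IsCompact (φ '' zetaSet X \ Set.range k) ∧
    ∀ Y : Set K, Set.range k ⊆ Y → Y ⊆ closure (Set.range k) →
      IsPseudocompactSet Y → IsCompact (Y \ Set.range k) → φ '' zetaSet X ⊆ Y := by
  refine ⟨?_, hkd.closure_eq ▸ subset_univ _, ?_, ?_, ?_⟩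
  · rintro _ ⟨x, rfl⟩
    exact ⟨stoneCechUnit x, subset_union_left (mem_range_self x), hφk x⟩
  · exact (isPseudocompactSet_of_compl_upsilonSet_subset subset_union_left
      (subset_closure.trans subset_union_right)).image hφ
  · rw [image_zetaSet_diff_range hlp hk hφ hφk]
    exact isClosed_closure.isCompact.image hφ
  · rintro Y hXY - hY hYc _ ⟨t, ⟨x, rfl⟩ | ht, rfl⟩
    · exact hφk x ▸ hXY (mem_range_self x)
    · exact (mapsTo_closure_compl_upsilonSet_diff_range hlp hk hkd hφ hφk hXY hY
        hYc.isClosed ht).1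

/-- Let `X` be a locally pseudocompact Tychonoff space, `K` a compactification of `X` (via the
dense embedding `k`), and `φ : βX → K` the continuous extension of the identity of `X`. Then
`φ[ζX]` is the smallest (w.r.t. `⊆`) pseudocompactification of `X` with compact remainder
contained in `K`: it contains `X` as a dense subspace, is pseudocompact with compact remainder,
and is contained in any pseudocompactification of `X` with compact remainder inside `K`. -/
theorem image_zetaSet_smallest (X K : Type*) [TopologicalSpace X] [T2Space X]
    [CompletelyRegularSpace X] [TopologicalSpace K] [CompactSpace K] [T2Space K]
    (hlp : ∀ x : X, ∃ U : Set X, IsOpen U ∧ x ∈ U ∧ IsPseudocompactSet (closure U))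
    (k : X → K) (hk : IsEmbedding k) (hkd : DenseRange k)
    (φ : StoneCech X → K) (hφ : Continuous φ)
    (hφk : ∀ x : X, φ (stoneCechUnit x) = k x) :
    Set.range k ⊆ φ '' zetaSet X ∧
    φ '' zetaSet X ⊆ closure (Set.range k) ∧
    IsPseudocompactSet (φ '' zetaSet X) ∧
    IsCompact (φ '' zetaSet X \ Set.range k) ∧
    ∀ Y : Set K, Set.range k ⊆ Y → Y ⊆ closure (Set.range k) →
      IsPseudocompactSet Y → IsCompact (Y \ Set.range k) → φ '' zetaSet X ⊆ Y :=
  image_zetaSet_smallest_general X K hlp k hk hkd φ hφ hφk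
end

section
/- Let X be a locally pseudocompact Tychonoff space. Then ζX is the unique (up to equivalence of extensions) pseudocompactification Y of X with compact remainder satisfying: cl_Y S ∩ cl_Y Z ⊆ X for every pair of zero-sets S and Z of X such that S ∩ Z is contained in a cozero-set of X with pseudocompact closure in X. -/
/-! Let `Φ = βe : βX → βY`; over a point `e x` it has the single preimage `x`. If `p ∉ υX`, a
zero-set of `βX` through `p` missing `X` yields a positive function on `X` with infimum `0`, and
pseudocompactness of `Y` puts a cluster point of its small values in the compact remainder: this
forces `Φ p ∈ Y \ X`, so `ζX ⊆ Φ⁻¹(Y)`. The condition on zero-sets gives the converse inclusion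
(a point over `Y \ X` with a neighbourhood inside `υX` lies in the closure of a zero-set contained
in a cozero-set with pseudocompact closure) and injectivity of `Φ` over `Y \ X` (two points would
be separated by disjoint zero-sets). So `Φ` restricts to a closed continuous bijection `ζX → Y`.
Conversely, in `ζX` the closures of zero-sets `S, Z` meet in `cl (S ∩ Z)`, which lies in the open
set `βX \ cl (X \ C) ⊆ cl C ⊆ υX`, away from `cl (βX \ υX)`. -/

open Set Topology

universe u

open Filter

section

variable {X : Type*} [TopologicalSpace X]

theorem IsZeroSet.inter {S Z : Set X} (hS : IsZeroSet S) (hZ : IsZeroSet Z) :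
    IsZeroSet (S ∩ Z) := by
  obtain ⟨f, rfl⟩ := hS
  obtain ⟨g, rfl⟩ := hZ
  refine ⟨⟨fun x => |f x| + |g x|, by fun_prop⟩, ?_⟩
  ext x
  simp only [mem_inter_iff, mem_preimage, mem_singleton_iff, ContinuousMap.coe_mk]
  rw [add_eq_zero_iff_of_nonneg (abs_nonneg _) (abs_nonneg _), abs_eq_zero, abs_eq_zero]

theorem isZeroSet_setOf_le {f : X → ℝ} (hf : Continuous f) (c : ℝ) :
    IsZeroSet {x | f x ≤ c} :=
  ⟨⟨fun x => max (f x - c) 0, by fun_prop⟩, by ext x; simp⟩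

theorem isZeroSet_setOf_ge {f : X → ℝ} (hf : Continuous f) (c : ℝ) :
    IsZeroSet {x | c ≤ f x} := by
  simpa using isZeroSet_setOf_le hf.neg (-c)

theorem isCozeroSet_setOf_lt {f : X → ℝ} (hf : Continuous f) (c : ℝ) :
    IsCozeroSet {x | f x < c} := by
  simpa [IsCozeroSet, compl_ofPred] using isZeroSet_setOf_ge hf c

theorem exists_continuous_extension_stoneCech {f : X → ℝ} (hf : Continuous f) {a b : ℝ}
    (hab : ∀ x, f x ∈ Icc a b) :
    ∃ F : C(StoneCech X, ℝ), ∀ x, F (stoneCechUnit x) = f x := by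
  have hg : Continuous (codRestrict f (Icc a b) hab) := hf.codRestrict hab
  exact ⟨⟨_, continuous_subtype_val.comp (continuous_stoneCechExtend hg)⟩,
    fun x => by simp⟩

theorem mem_closure_stoneCechUnit_image_inter_preimage {O : Set (StoneCech X)} (hO : IsOpen O)
    {p : StoneCech X} (hpO : p ∈ O) {S : Set X} (hp : p ∈ closure (stoneCechUnit '' S)) :
    p ∈ closure (stoneCechUnit '' (S ∩ stoneCechUnit ⁻¹' O)) := by
  rw [image_inter_preimage, inter_comm]
  exact hO.inter_closure ⟨hpO, hp⟩

/-- Disjoint zero-sets are completely separated, by `|f| / (|f| + |g|)`. -/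
theorem disjoint_closure_stoneCechUnit_image {S Z : Set X} (hS : IsZeroSet S)
    (hZ : IsZeroSet Z) (hSZ : Disjoint S Z) :
    Disjoint (closure (stoneCechUnit '' S)) (closure (stoneCechUnit '' Z)) := by
  obtain ⟨f, rfl⟩ := hS
  obtain ⟨g, rfl⟩ := hZ
  have hpos : ∀ x, 0 < |f x| + |g x| := fun x => by
    by_contra! h
    have hfx : f x = 0 := abs_eq_zero.mp (by linarith [abs_nonneg (f x), abs_nonneg (g x)])
    have hgx : g x = 0 := abs_eq_zero.mp (by linarith [abs_nonneg (f x), abs_nonneg (g x)])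
    exact disjoint_left.mp hSZ hfx hgx
  have hk : Continuous fun x => |f x| / (|f x| + |g x|) :=
    by fun_prop (disch := exact fun x => (hpos x).ne')
  obtain ⟨K, hK⟩ := exists_continuous_extension_stoneCech hk (a := 0) (b := 1) fun x =>
    ⟨by positivity, (div_le_one (hpos x)).mpr (le_add_of_nonneg_right (abs_nonneg _))⟩
  have hK0 : closure (stoneCechUnit '' (f ⁻¹' {0})) ⊆ K ⁻¹' {0} :=
    closure_minimal (by rintro _ ⟨x, hx, rfl⟩; simp_all) (isClosed_singleton.preimage K.2)
  have hK1 : closure (stoneCechUnit '' (g ⁻¹' {0})) ⊆ K ⁻¹' {1} :=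
    closure_minimal (by
      rintro _ ⟨x, hx, rfl⟩
      have hfx : f x ≠ 0 := fun h => disjoint_left.mp hSZ h hx
      simp_all) (isClosed_singleton.preimage K.2)
  exact Disjoint.mono hK0 hK1 ((disjoint_singleton.mpr zero_ne_one).preimage K)

theorem closure_stoneCechUnit_image_inter {S Z : Set X} (hS : IsZeroSet S) (hZ : IsZeroSet Z) :
    closure (stoneCechUnit '' S) ∩ closure (stoneCechUnit '' Z) ⊆
      closure (stoneCechUnit '' (S ∩ Z)) := by
  rintro p ⟨hpS, hpZ⟩
  by_contra hp
  obtain ⟨φ, hφp, hφ1, -⟩ := exists_continuous_zero_one_of_isClosed isClosed_singleton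
    isClosed_closure (disjoint_singleton_left.mpr hp)
  have hφu : Continuous fun x => φ (stoneCechUnit x) := φ.2.comp continuous_stoneCechUnit
  have hO : IsOpen {q | φ q < 1 / 2} := isOpen_lt φ.2 continuous_const
  have hpO : p ∈ {q | φ q < 1 / 2} := by simp [hφp rfl]
  have hnear : ∀ T : Set X, p ∈ closure (stoneCechUnit '' T) →
      p ∈ closure (stoneCechUnit '' (T ∩ {x | φ (stoneCechUnit x) ≤ 1 / 2})) := by
    intro T hT
    refine closure_mono (image_mono (inter_subset_inter_right _ ?_))
      (mem_closure_stoneCechUnit_image_inter_preimage hO hpO hT)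
    intro x hx
    exact le_of_lt (show φ (stoneCechUnit x) < 1 / 2 from hx)
  have hdisj : Disjoint (S ∩ {x | φ (stoneCechUnit x) ≤ 1 / 2})
      (Z ∩ {x | φ (stoneCechUnit x) ≤ 1 / 2}) := by
    refine disjoint_left.mpr fun x ⟨hxS, hx⟩ ⟨hxZ, _⟩ => ?_
    have : φ (stoneCechUnit x) = 1 := hφ1 (subset_closure ⟨x, ⟨hxS, hxZ⟩, rfl⟩)
    norm_num [mem_ofPred_eq, this] at hx
  exact disjoint_left.mp (disjoint_closure_stoneCechUnit_image
    (hS.inter (isZeroSet_setOf_le hφu _)) (hZ.inter (isZeroSet_setOf_le hφu _)) hdisj)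
    (hnear S hpS) (hnear Z hpZ)

/-- `A` is *bounded* in `X`, in Hewitt's sense. -/
def IsRelativelyPseudocompact (A : Set X) : Prop :=
  ∀ f : C(X, ℝ), ∃ M : ℝ, ∀ x ∈ A, |f x| ≤ M

theorem IsPseudocompactSet.isRelativelyPseudocompact {A : Set X} (hA : IsPseudocompactSet A) :
    IsRelativelyPseudocompact A := fun f => by
  obtain ⟨M, hM⟩ := hA (f.restrict A)
  exact ⟨M, fun x hx => hM ⟨x, hx⟩⟩

theorem closure_stoneCechUnit_image_subset_upsilonSet_iff {A : Set X} :
    closure (stoneCechUnit '' A) ⊆ upsilonSet X ↔ IsRelativelyPseudocompact A := by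
  constructor
  · intro hA f
    have hpos : ∀ x, 0 < 1 + |f x| := fun x => by positivity
    have hg : Continuous fun x => 1 / (1 + |f x|) :=
      by fun_prop (disch := exact fun x => (hpos x).ne')
    obtain ⟨G, hG⟩ := exists_continuous_extension_stoneCech hg (a := 0) (b := 1) fun x =>
      ⟨by positivity, (div_le_one (hpos x)).mpr (le_add_of_nonneg_right (abs_nonneg _))⟩
    rcases (closure (stoneCechUnit '' A)).eq_empty_or_nonempty with hempty | hne
    · exact ⟨0, fun x hx => (hempty.subset (subset_closure ⟨x, hx, rfl⟩)).elim⟩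
    -- `G` attains its minimum over the compact `cl A` at a point of `υX`, so also at a point of `X`
    obtain ⟨p, hpA, hpmin⟩ :=
      isClosed_closure.isCompact.exists_isMinOn hne G.continuous.continuousOn
    obtain ⟨_, hxp, x₀, rfl⟩ := hA hpA (⇑(G - ContinuousMap.const (StoneCech X) (G p)) ⁻¹' {0})
      ⟨_, rfl⟩ (by simp)
    have hx₀ : G (stoneCechUnit x₀) = G p := sub_eq_zero.mp hxp
    refine ⟨1 / G p, fun x hx => ?_⟩
    have hle : G p ≤ 1 / (1 + |f x|) := hG x ▸ hpmin (subset_closure ⟨x, hx, rfl⟩)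
    have hGp : 0 < G p := hx₀ ▸ hG x₀ ▸ one_div_pos.mpr (hpos x₀)
    rw [le_div_iff₀ (hpos x)] at hle
    rw [le_div_iff₀ hGp]
    nlinarith
  · intro hA p hp Z ⟨Φ, hZ⟩ hpZ
    subst hZ
    by_contra hX
    have hΦ : ∀ x, Φ (stoneCechUnit x) ≠ 0 := fun x h => hX ⟨_, h, x, rfl⟩
    obtain ⟨M, hM⟩ := hA ⟨fun x => 1 / Φ (stoneCechUnit x),
      continuous_const.div (Φ.2.comp continuous_stoneCechUnit) hΦ⟩
    have hbound : closure (stoneCechUnit '' A) ⊆ {q | 1 ≤ M * |Φ q|} := by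
      refine closure_minimal ?_ (isClosed_le continuous_const (by fun_prop))
      rintro _ ⟨x, hx, rfl⟩
      have h := hM x hx
      simp only [ContinuousMap.coe_mk, one_div, abs_inv] at h
      exact (inv_le_iff_one_le_mul₀ (abs_pos.mpr (hΦ x))).mp h
    have := hbound hp
    norm_num [show Φ p = 0 from hpZ] at this

theorem LocallyFinite.image_subtypeVal {ι : Type*} {s : Set X} (hs : IsClosed s)
    {f : ι → Set s} (hf : LocallyFinite f) :
    LocallyFinite fun i => ((↑) : s → X) '' f i := by
  intro p
  by_cases hp : p ∈ s
  · obtain ⟨t, ht, hfin⟩ := hf ⟨p, hp⟩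
    obtain ⟨u, hu, hut⟩ := (mem_nhds_subtype s _ t).mp ht
    exact ⟨u, hu, hfin.subset fun i ⟨_, ⟨z, hz, rfl⟩, hzu⟩ => ⟨z, hz, hut hzu⟩⟩
  · exact ⟨sᶜ, hs.isOpen_compl.mem_nhds hp,
      finite_empty.subset fun i ⟨_, ⟨z, _, rfl⟩, hz⟩ => hz z.2⟩

theorem locallyFinite_setOf_natCast_lt {f : X → ℝ} (hf : Continuous f) :
    LocallyFinite fun n : ℕ => {x | (n : ℝ) < f x} := by
  intro p
  refine ⟨{x | f x < f p + 1}, (isOpen_lt hf continuous_const).mem_nhds (by simp),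
    (finite_Iio ⌈f p + 1⌉₊).subset fun n ⟨x, hxn, hxp⟩ => ?_⟩
  have : (n : ℝ) < f p + 1 := lt_trans hxn hxp
  exact Nat.lt_ceil.mpr this

end

section

variable {X : Type*} [TopologicalSpace X] [CompletelyRegularSpace X]

/-- The sum of bumps `n • (1 - gₙ)` supported in `W n` and peaking at `x n`. -/
theorem exists_continuous_natCast_le_of_locallyFinite {W : ℕ → Set X} (hW : LocallyFinite W)
    (hWo : ∀ n, IsOpen (W n)) {x : ℕ → X} (hx : ∀ n, x n ∈ W n) :
    ∃ F : C(X, ℝ), ∀ n : ℕ, (n : ℝ) ≤ F (x n) := by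
  choose g hg hgx hgW using fun n => CompletelyRegularSpace.completely_regular (x n) (W n)ᶜ
    (hWo n).isClosed_compl (by simpa using hx n)
  set f : ℕ → X → ℝ := fun n y => n * (1 - g n y)
  have hf0 : ∀ n y, 0 ≤ f n y := fun n y =>
    mul_nonneg n.cast_nonneg (sub_nonneg.mpr (g n y).2.2)
  have hsupp : ∀ n, Function.support (f n) ⊆ W n := fun n y hy => by
    by_contra hyW
    exact hy (by simp [f, hgW n hyW])
  have hlf : LocallyFinite fun n => Function.support (f n) := hW.subset hsupp
  refine ⟨⟨fun y => ∑ᶠ n, f n y, continuous_finsum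
    (fun n => by fun_prop (disch := exact hg n)) hlf⟩, fun n => ?_⟩
  calc (n : ℝ) = f n (x n) := by simp [f, hgx n]
    _ ≤ ∑ᶠ k, f k (x n) :=
      single_le_finsum n (hlf.point_finite (x n)) fun k => hf0 k (x n)

theorem IsPseudocompact.exists_forall_mem_closure (hX : IsPseudocompact X) {O : ℕ → Set X}
    (hO : ∀ n, IsOpen (O n)) (hne : ∀ n, (O n).Nonempty) (hanti : Antitone O) :
    ∃ y, ∀ n, y ∈ closure (O n) := by
  by_contra! h
  have hlf : LocallyFinite O := fun y => by
    obtain ⟨m, hm⟩ := h y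
    refine ⟨(closure (O m))ᶜ, isClosed_closure.isOpen_compl.mem_nhds hm,
      (finite_Iio m).subset fun n ⟨z, hzn, hzm⟩ => ?_⟩
    by_contra! hmn
    exact hzm (subset_closure (hanti (not_lt.mp hmn) hzn))
  choose y hy using hne
  obtain ⟨F, hF⟩ := exists_continuous_natCast_le_of_locallyFinite hlf hO hy
  obtain ⟨M, hM⟩ := hX F
  obtain ⟨n, hn⟩ := exists_nat_gt M
  linarith [hF n, hM (y n), le_abs_self (F (y n))]

/-- For `g` unbounded on `cl C`, the sets `C ∩ {|g| > n}` are open in `X` and, `cl C` being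
closed, form a locally finite family; this yields a continuous function on `X` unbounded on `C`. -/
theorem IsRelativelyPseudocompact.isPseudocompactSet_closure {C : Set X} (hC : IsOpen C)
    (h : IsRelativelyPseudocompact C) : IsPseudocompactSet (closure C) := by
  intro g
  by_contra! hg
  set U : ℕ → Set (closure C) := fun n => {z | (n : ℝ) < |g z|}
  have hUo : ∀ n, IsOpen (U n) := fun n => isOpen_lt continuous_const (by fun_prop)
  set W : ℕ → Set X := fun n => (↑) '' (U n ∩ (↑) ⁻¹' C)
  have hWo : ∀ n, IsOpen (W n) := fun n => by
    obtain ⟨V, hV, hVU⟩ := isOpen_induced_iff.mp (hUo n)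
    have : W n = V ∩ C := by
      simp only [W, ← hVU, ← preimage_inter, Subtype.image_preimage_coe]
      exact inter_eq_right.mpr (inter_subset_right.trans subset_closure)
    exact this ▸ hV.inter hC
  have hW : LocallyFinite W :=
    ((locallyFinite_setOf_natCast_lt (by fun_prop)).image_subtypeVal isClosed_closure).subset
      fun n => image_mono inter_subset_left
  have hdense : Dense ((↑) ⁻¹' C : Set (closure C)) := Subtype.dense_iff.mpr <| by
    rw [Subtype.image_preimage_coe, inter_eq_right.mpr subset_closure]
  choose x hx using fun n => ((hdense.inter_open_nonempty _ (hUo n) (hg n)).image ((↑) : _ → X))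
  obtain ⟨F, hF⟩ := exists_continuous_natCast_le_of_locallyFinite hW hWo hx
  obtain ⟨M, hM⟩ := h F
  obtain ⟨n, hn⟩ := exists_nat_gt M
  have hxC : x n ∈ C := by
    obtain ⟨z, ⟨_, hz⟩, hzx⟩ := hx n
    exact hzx ▸ hz
  linarith [hF n, hM _ hxC, le_abs_self (F (x n))]

end

theorem isHomeomorph_restrictPreimage_of_injOn {K L : Type*} [TopologicalSpace K]
    [TopologicalSpace L] [CompactSpace K] [T2Space L] {f : K → L} (hf : Continuous f)
    (hsurj : Function.Surjective f) {s : Set L} (hinj : InjOn f (f ⁻¹' s)) :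
    IsHomeomorph (s.restrictPreimage f) :=
  isHomeomorph_iff_continuous_isClosedMap_bijective.mpr ⟨hf.restrictPreimage,
    hf.isClosedMap.restrictPreimage s,
    fun a b hab => Subtype.ext (hinj a.2 b.2 (congrArg Subtype.val hab)),
    s.restrictPreimage_surjective hsurj⟩

section StoneCechMap

variable {X Y : Type*} [TopologicalSpace X] [TopologicalSpace Y] {e : X → Y}

noncomputable def stoneCechMap (he : Continuous e) : StoneCech X → StoneCech Y :=
  stoneCechExtend (continuous_stoneCechUnit.comp he)

theorem continuous_stoneCechMap (he : Continuous e) : Continuous (stoneCechMap he) :=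
  continuous_stoneCechExtend _

@[simp]
theorem stoneCechMap_stoneCechUnit (he : Continuous e) (x : X) :
    stoneCechMap he (stoneCechUnit x) = stoneCechUnit (e x) :=
  stoneCechExtend_stoneCechUnit _ x

theorem surjective_stoneCechMap (he : Continuous e) (hd : DenseRange e) :
    Function.Surjective (stoneCechMap he) := by
  have hdense : DenseRange (stoneCechMap he) := by
    refine Dense.mono ?_ (denseRange_stoneCechUnit.comp hd continuous_stoneCechUnit)
    rintro _ ⟨x, rfl⟩
    exact ⟨stoneCechUnit x, stoneCechMap_stoneCechUnit he x⟩
  rw [← range_eq_univ, ← (isCompact_range (continuous_stoneCechMap he)).isClosed.closure_eq,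
    hdense.closure_range]

theorem eq_stoneCechUnit_of_stoneCechMap_eq [CompletelyRegularSpace Y] (he : IsInducing e)
    {p : StoneCech X} {x : X} (hp : stoneCechMap he.continuous p = stoneCechUnit (e x)) :
    p = stoneCechUnit x := by
  set F := comap stoneCechUnit (𝓝 p)
  have hF : F.NeBot := comap_neBot fun s hs => by
    obtain ⟨_, hs', a, rfl⟩ := mem_closure_iff_nhds.mp (denseRange_stoneCechUnit p) s hs
    exact ⟨a, hs'⟩
  have hu : Tendsto stoneCechUnit F (𝓝 p) := tendsto_comap
  have hue : Tendsto (stoneCechUnit ∘ e) F (𝓝 (stoneCechUnit (e x))) := by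
    have := ((continuous_stoneCechMap he.continuous).tendsto p).comp hu
    rwa [hp, show stoneCechMap he.continuous ∘ stoneCechUnit = stoneCechUnit ∘ e from
      funext (stoneCechMap_stoneCechUnit he.continuous)] at this
  have hx : Tendsto id F (𝓝 x) :=
    he.tendsto_nhds_iff.mpr (isInducing_stoneCechUnit.tendsto_nhds_iff.mpr hue)
  exact tendsto_nhds_unique hu ((continuous_stoneCechUnit.tendsto x).comp hx)

theorem mem_closure_image_of_stoneCechMap_eq [CompletelyRegularSpace Y] (he : Continuous e)
    {O : Set (StoneCech X)} (hO : IsOpen O) {t : StoneCech X} (ht : t ∈ O) {y : Y}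
    (hty : stoneCechMap he t = stoneCechUnit y) :
    y ∈ closure (e '' (stoneCechUnit ⁻¹' O)) := by
  have h1 : t ∈ closure (stoneCechUnit '' (stoneCechUnit ⁻¹' O)) := by
    simpa using mem_closure_stoneCechUnit_image_inter_preimage hO ht (S := univ)
      (by simp [denseRange_stoneCechUnit.closure_range])
  have h2 := image_closure_subset_closure_image (continuous_stoneCechMap he) (mem_image_of_mem _ h1)
  rw [isInducing_stoneCechUnit.closure_eq_preimage_closure_image, mem_preimage, image_image,
    ← hty]
  simpa only [image_image, stoneCechMap_stoneCechUnit] using h2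

/-- The sets `e '' {g < 1 / (n + 1)}` are open and decrease; a common point of their closures
cannot lie in `e '' X`, where `g` is positive. -/
theorem IsPseudocompact.exists_forall_mem_closure_image_lt [CompletelyRegularSpace Y]
    (hY : IsPseudocompact Y) (he : IsOpenEmbedding e) {g : X → ℝ} (hg : Continuous g)
    (hpos : ∀ x, 0 < g x) (hsmall : ∀ ε > 0, ∃ x, g x < ε) :
    ∃ y ∉ range e, ∀ ε > 0, y ∈ closure (e '' {x | g x < ε}) := by
  have hO : ∀ ε, IsOpen (e '' {x | g x < ε}) := fun ε =>
    he.isOpenMap _ (isOpen_lt hg continuous_const)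
  have hanti : Antitone fun n : ℕ => e '' {x | g x < 1 / (n + 1)} := fun m n hmn =>
    image_mono fun x (hx : g x < _) => hx.trans_le <| one_div_le_one_div_of_le (by positivity)
      (by gcongr)
  obtain ⟨y, hy⟩ := hY.exists_forall_mem_closure (fun n => hO _)
    (fun n => (hsmall _ Nat.one_div_pos_of_nat).elim fun x hx => ⟨e x, x, hx, rfl⟩) hanti
  refine ⟨y, ?_, fun ε hε => ?_⟩
  · rintro ⟨x, rfl⟩
    obtain ⟨n, hn⟩ := exists_nat_one_div_lt (hpos x)
    obtain ⟨_, ⟨x₁, hx₁, rfl⟩, x₂, hx₂, h₁₂⟩ := mem_closure_iff.mp (hy n) _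
      (he.isOpenMap _ (isOpen_lt continuous_const hg)) (mem_image_of_mem e hn)
    have hx₁ : 1 / ((n : ℝ) + 1) < g x₁ := hx₁
    have hx₂ : g x₂ < 1 / ((n : ℝ) + 1) := hx₂
    rw [he.injective h₁₂] at hx₂
    linarith
  · obtain ⟨n, hn⟩ := exists_nat_one_div_lt hε
    exact closure_mono (image_mono fun x (hx : g x < _) => hx.trans hn) (hy n)

theorem stoneCechMap_mem_image_compl_range [CompletelyRegularSpace Y] (hY : IsPseudocompact Y)
    (he : IsOpenEmbedding e) (hrem : IsCompact (range e)ᶜ) {p : StoneCech X}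
    (hp : p ∉ upsilonSet X) :
    stoneCechMap he.continuous p ∈ stoneCechUnit '' (range e)ᶜ := by
  simp only [upsilonSet, mem_ofPred_eq, not_forall] at hp
  obtain ⟨_, ⟨G, rfl⟩, hpG, hGX⟩ := hp
  by_contra hq
  obtain ⟨H, hHq, hH1, -⟩ := exists_continuous_zero_one_of_isClosed isClosed_singleton
    (hrem.image continuous_stoneCechUnit).isClosed (disjoint_singleton_left.mpr hq)
  set Ψ : StoneCech X → ℝ := fun q => |G q| + |H (stoneCechMap he.continuous q)|
  have hΨ : Continuous Ψ :=
    G.2.abs.add (H.2.comp (continuous_stoneCechMap he.continuous)).abs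
  have hpos : ∀ x, 0 < Ψ (stoneCechUnit x) := fun x =>
    add_pos_of_pos_of_nonneg (abs_pos.mpr fun h => hGX ⟨_, h, x, rfl⟩) (abs_nonneg _)
  have hsmall : ∀ ε > 0, ∃ x, Ψ (stoneCechUnit x) < ε := fun ε hε =>
    denseRange_stoneCechUnit.exists_mem_open (isOpen_lt hΨ continuous_const)
      ⟨p, by simpa [Ψ, show G p = 0 from hpG, hHq rfl] using hε⟩
  obtain ⟨y, hy, hyc⟩ :=
    hY.exists_forall_mem_closure_image_lt he (hΨ.comp continuous_stoneCechUnit) hpos hsmall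
  have hHy : H (stoneCechUnit y) = 1 := hH1 ⟨y, hy, rfl⟩
  have hle : closure (e '' {x | Ψ (stoneCechUnit x) < 1 / 2}) ⊆
      {y | H (stoneCechUnit y) ≤ 1 / 2} := by
    refine closure_minimal ?_ (isClosed_le (H.2.comp continuous_stoneCechUnit) continuous_const)
    rintro _ ⟨x, hx, rfl⟩
    have hx : Ψ (stoneCechUnit x) < 1 / 2 := hx
    simp only [Ψ, stoneCechMap_stoneCechUnit] at hx
    show H (stoneCechUnit (e x)) ≤ 1 / 2
    linarith [abs_nonneg (G (stoneCechUnit x)), le_abs_self (H (stoneCechUnit (e x)))]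
  have := hle (hyc (1 / 2) (by norm_num))
  norm_num [mem_ofPred_eq, hHy] at this

end StoneCechMap

section

variable {X Y : Type*} [TopologicalSpace X] [TopologicalSpace Y] {e : X → Y}

def ClosuresOfZeroSetsMeetInRange (e : X → Y) : Prop :=
  ∀ S Z : Set X, IsZeroSet S → IsZeroSet Z →
    (∃ C : Set X, IsCozeroSet C ∧ IsPseudocompactSet (closure C) ∧ S ∩ Z ⊆ C) →
    closure (e '' S) ∩ closure (e '' Z) ⊆ Set.range e

namespace ClosuresOfZeroSetsMeetInRange

variable [CompletelyRegularSpace Y]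

/-- Otherwise `t` has a neighbourhood inside `υX`; it yields a zero-set `S ∋ t` lying in a
cozero-set with pseudocompact closure, and `htr` applied to `S, S` puts `y` into `X`. -/
theorem mem_closure_compl_upsilonSet [CompletelyRegularSpace X]
    (htr : ClosuresOfZeroSetsMeetInRange e) (he : Continuous e) {t : StoneCech X} {y : Y}
    (hy : y ∉ range e) (ht : stoneCechMap he t = stoneCechUnit y) :
    t ∈ closure (upsilonSet X)ᶜ := by
  by_contra hcl
  obtain ⟨Θ, hΘt, hΘ1, -⟩ := exists_continuous_zero_one_of_isClosed isClosed_singleton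
    isClosed_closure (disjoint_singleton_left.mpr hcl)
  have hθ : Continuous fun x => Θ (stoneCechUnit x) := Θ.2.comp continuous_stoneCechUnit
  set S := {x | Θ (stoneCechUnit x) ≤ 1 / 2}
  set C := {x | Θ (stoneCechUnit x) < 2 / 3}
  have hCups : closure (stoneCechUnit '' C) ⊆ upsilonSet X := by
    have hle : closure (stoneCechUnit '' C) ⊆ {q | Θ q ≤ 2 / 3} :=
      closure_minimal (image_subset_iff.mpr fun x (hx : Θ (stoneCechUnit x) < 2 / 3) => hx.le)
        (isClosed_le Θ.2 continuous_const)
    refine fun q hq => not_not.mp fun hqu => ?_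
    have h1 : Θ q = 1 := hΘ1 (subset_closure hqu)
    have h2 : Θ q ≤ 2 / 3 := hle hq
    linarith
  have hCpc : IsPseudocompactSet (closure C) :=
    (closure_stoneCechUnit_image_subset_upsilonSet_iff.mp hCups).isPseudocompactSet_closure
      (isOpen_lt hθ continuous_const)
  have hyS : y ∈ closure (e '' S) :=
    closure_mono (image_mono fun x (hx : Θ (stoneCechUnit x) < 1 / 2) => le_of_lt hx)
      (mem_closure_image_of_stoneCechMap_eq he (isOpen_lt Θ.2 continuous_const)
        (show Θ t < 1 / 2 by norm_num [hΘt rfl]) ht)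
  have hSC : S ∩ S ⊆ C := fun x ⟨(hx : Θ (stoneCechUnit x) ≤ 1 / 2), _⟩ =>
    show Θ (stoneCechUnit x) < 2 / 3 by linarith
  exact hy (htr S S (isZeroSet_setOf_le hθ _) (isZeroSet_setOf_le hθ _)
    ⟨C, isCozeroSet_setOf_lt hθ _, hCpc, hSC⟩ ⟨hyS, hyS⟩)

theorem eq_of_stoneCechMap_eq (htr : ClosuresOfZeroSetsMeetInRange e) (he : Continuous e)
    {t₁ t₂ : StoneCech X} {y : Y} (hy : y ∉ range e)
    (h₁ : stoneCechMap he t₁ = stoneCechUnit y)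
    (h₂ : stoneCechMap he t₂ = stoneCechUnit y) : t₁ = t₂ := by
  by_contra hne
  obtain ⟨φ, hφ0, hφ1, -⟩ := exists_continuous_zero_one_of_isClosed isClosed_singleton
    isClosed_singleton (disjoint_singleton.mpr hne)
  have hθ : Continuous fun x => φ (stoneCechUnit x) := φ.2.comp continuous_stoneCechUnit
  have hyS : y ∈ closure (e '' {x | φ (stoneCechUnit x) ≤ 1 / 3}) :=
    closure_mono (image_mono fun x (hx : φ (stoneCechUnit x) < 1 / 3) => le_of_lt hx)
      (mem_closure_image_of_stoneCechMap_eq he (isOpen_lt φ.2 continuous_const)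
        (show φ t₁ < 1 / 3 by norm_num [hφ0 rfl]) h₁)
  have hyZ : y ∈ closure (e '' {x | 2 / 3 ≤ φ (stoneCechUnit x)}) :=
    closure_mono (image_mono fun x (hx : 2 / 3 < φ (stoneCechUnit x)) => le_of_lt hx)
      (mem_closure_image_of_stoneCechMap_eq he (isOpen_lt continuous_const φ.2)
        (show 2 / 3 < φ t₂ by norm_num [hφ1 rfl]) h₂)
  have hC : IsCozeroSet (∅ : Set X) := ⟨0, by ext; simp⟩
  have hCpc : IsPseudocompactSet (closure (∅ : Set X)) := fun _ =>
    ⟨0, fun a => (closure_empty.subset a.2).elim⟩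
  have hSZ : {x | φ (stoneCechUnit x) ≤ 1 / 3} ∩ {x | 2 / 3 ≤ φ (stoneCechUnit x)} ⊆ ∅ :=
    fun x ⟨(h1 : φ (stoneCechUnit x) ≤ 1 / 3), (h2 : 2 / 3 ≤ φ (stoneCechUnit x))⟩ => by
      linarith
  exact hy (htr _ _ (isZeroSet_setOf_le hθ _) (isZeroSet_setOf_ge hθ _) ⟨∅, hC, hCpc, hSZ⟩
    ⟨hyS, hyZ⟩)

theorem injOn_stoneCechMap (htr : ClosuresOfZeroSetsMeetInRange e) (he : IsInducing e) :
    InjOn (stoneCechMap he.continuous) (stoneCechMap he.continuous ⁻¹' range stoneCechUnit) := by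
  rintro t₁ ⟨y, hy⟩ t₂ - h
  by_cases hyr : y ∈ range e
  · obtain ⟨x, rfl⟩ := hyr
    have h₁ := eq_stoneCechUnit_of_stoneCechMap_eq he hy.symm
    have h₂ := eq_stoneCechUnit_of_stoneCechMap_eq he (h ▸ hy).symm
    rw [h₁, h₂]
  · exact htr.eq_of_stoneCechMap_eq he.continuous hyr hy.symm (h ▸ hy.symm)

theorem preimage_range_stoneCechMap [CompletelyRegularSpace X]
    (htr : ClosuresOfZeroSetsMeetInRange e)
    (hY : IsPseudocompact Y) (he : IsOpenEmbedding e) (hrem : IsCompact (range e)ᶜ) :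
    stoneCechMap he.continuous ⁻¹' range stoneCechUnit = zetaSet X := by
  ext p
  constructor
  · rintro ⟨y, hy⟩
    by_cases hyr : y ∈ range e
    · obtain ⟨x, rfl⟩ := hyr
      exact Or.inl ⟨x, (eq_stoneCechUnit_of_stoneCechMap_eq he.isInducing hy.symm).symm⟩
    · exact Or.inr (htr.mem_closure_compl_upsilonSet he.continuous hyr hy.symm)
  · rintro (⟨x, rfl⟩ | hp)
    · exact ⟨e x, (stoneCechMap_stoneCechUnit _ x).symm⟩
    · have hcl : closure (upsilonSet X)ᶜ ⊆
          stoneCechMap he.continuous ⁻¹' (stoneCechUnit '' (range e)ᶜ) :=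
        closure_minimal (fun q hq => stoneCechMap_mem_image_compl_range hY he hrem hq)
          ((hrem.image continuous_stoneCechUnit).isClosed.preimage (continuous_stoneCechMap _))
      exact image_subset_range _ _ (hcl hp)

end ClosuresOfZeroSetsMeetInRange

/-- The open set `βX \ cl (X \ C)` lies in `cl C ⊆ υX` and, `Cᶜ` being a zero-set disjoint
from `S ∩ Z`, contains `cl S ∩ cl Z`. -/
theorem disjoint_closure_inter_closure_compl_upsilonSet {S Z C : Set X} (hS : IsZeroSet S)
    (hZ : IsZeroSet Z) (hC : IsCozeroSet C) (hCpc : IsPseudocompactSet (closure C))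
    (hSZ : S ∩ Z ⊆ C) :
    Disjoint (closure (stoneCechUnit '' S) ∩ closure (stoneCechUnit '' Z))
      (closure (upsilonSet X)ᶜ) := by
  set V := (closure (stoneCechUnit '' Cᶜ))ᶜ
  have hV : V ⊆ upsilonSet X := by
    have hcover : closure (stoneCechUnit '' C) ∪ closure (stoneCechUnit '' Cᶜ) = univ := by
      rw [← closure_union, ← image_union, union_compl_self, image_univ,
        denseRange_stoneCechUnit.closure_range]
    intro z hz
    have hzC : z ∈ closure (stoneCechUnit '' C) := (hcover ▸ mem_univ z).resolve_right hz
    exact closure_stoneCechUnit_image_subset_upsilonSet_iff.mpr hCpc.isRelativelyPseudocompact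
      (closure_mono (image_mono subset_closure) hzC)
  have hSZV : closure (stoneCechUnit '' S) ∩ closure (stoneCechUnit '' Z) ⊆ V := fun p hp =>
    disjoint_left.mp (disjoint_closure_stoneCechUnit_image (hS.inter hZ) hC
      (disjoint_compl_right.mono_left hSZ)) (closure_stoneCechUnit_image_inter hS hZ hp)
  exact ((disjoint_compl_right_iff_subset.mpr hV).closure_right
    isClosed_closure.isOpen_compl).mono_left hSZV

theorem closuresOfZeroSetsMeetInRange_of_homeomorph (h : Y ≃ₜ zetaSet X)
    (hh : ∀ x, (h (e x) : StoneCech X) = stoneCechUnit x) : ClosuresOfZeroSetsMeetInRange e := by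
  rintro S Z hS hZ ⟨C, hC, hCpc, hSZ⟩ y ⟨hyS, hyZ⟩
  have hmap : ∀ T : Set X, y ∈ closure (e '' T) →
      (h y : StoneCech X) ∈ closure (stoneCechUnit '' T) := by
    intro T hT
    have := image_closure_subset_closure_image (continuous_subtype_val.comp h.continuous)
      (mem_image_of_mem _ hT)
    simpa only [image_image, Function.comp_apply, hh] using this
  rcases (h y).2 with ⟨x, hx⟩ | hyc
  · exact ⟨x, h.injective (Subtype.ext (by rw [hh x, hx]))⟩
  · exact ((disjoint_closure_inter_closure_compl_upsilonSet hS hZ hC hCpc hSZ).ne_of_mem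
      ⟨hmap S hyS, hmap Z hyZ⟩ hyc rfl).elim

end

theorem zetaSet_unique_pseudocompactification_general (X : Type u) [TopologicalSpace X]
    [CompletelyRegularSpace X]
    (Y : Type u) [TopologicalSpace Y] [T2Space Y] [CompletelyRegularSpace Y]
    (e : X → Y) (he : IsEmbedding e) (hd : DenseRange e)
    (hps : IsPseudocompact Y) (hrem : IsCompact (Set.range e)ᶜ) :
    (∀ S Z : Set X, IsZeroSet S → IsZeroSet Z →
        (∃ C : Set X, IsCozeroSet C ∧ IsPseudocompactSet (closure C) ∧ S ∩ Z ⊆ C) →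
        closure (e '' S) ∩ closure (e '' Z) ⊆ Set.range e) ↔
    ∃ h : Y ≃ₜ zetaSet X, ∀ x : X, (h (e x) : StoneCech X) = stoneCechUnit x := by
  refine ⟨fun (htr : ClosuresOfZeroSetsMeetInRange e) => ?_,
    fun ⟨h, hh⟩ => closuresOfZeroSetsMeetInRange_of_homeomorph h hh⟩
  have heo : IsOpenEmbedding e := ⟨he, isClosed_compl_iff.mp hrem.isClosed⟩
  have hζ := htr.preimage_range_stoneCechMap hps heo hrem
  have hΦ := isHomeomorph_restrictPreimage_of_injOn (continuous_stoneCechMap he.continuous)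
    (surjective_stoneCechMap he.continuous hd) (htr.injOn_stoneCechMap he.isInducing)
  have : T35Space Y := ⟨⟩
  refine ⟨isEmbedding_stoneCechUnit.toHomeomorph.trans
    ((hΦ.homeomorph _).symm.trans (Homeomorph.setCongr hζ)), fun x => ?_⟩
  have h₁ : isEmbedding_stoneCechUnit.toHomeomorph (e x) = ⟨stoneCechUnit (e x), e x, rfl⟩ :=
    Subtype.ext (by simp)
  have h₂ : (hΦ.homeomorph _).symm ⟨stoneCechUnit (e x), e x, rfl⟩ =
      ⟨stoneCechUnit x, e x, (stoneCechMap_stoneCechUnit he.continuous x).symm⟩ :=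
    (Homeomorph.symm_apply_eq _).mpr
      (Subtype.ext (stoneCechMap_stoneCechUnit he.continuous x).symm)
  simp only [Homeomorph.trans_apply, h₁, h₂]
  rfl

/-- Let `X` be a locally pseudocompact Tychonoff space. Then `ζX` is the unique (up to
equivalence of extensions) pseudocompactification `Y` of `X` with compact remainder satisfying:
`cl_Y S ∩ cl_Y Z ⊆ X` for every pair of zero-sets `S`, `Z` of `X` such that `S ∩ Z` is
contained in a cozero-set of `X` with pseudocompact closure. Formally: a pseudocompactification
`Y` of `X` (via the dense embedding `e`) with compact remainder satisfies this condition iff it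
is equivalent to `ζX`, i.e. there is a homeomorphism of `Y` onto `ζX` fixing `X` pointwise. -/
theorem zetaSet_unique_pseudocompactification (X : Type u) [TopologicalSpace X] [T2Space X]
    [CompletelyRegularSpace X]
    (hlp : ∀ x : X, ∃ U : Set X, IsOpen U ∧ x ∈ U ∧ IsPseudocompactSet (closure U))
    (Y : Type u) [TopologicalSpace Y] [T2Space Y] [CompletelyRegularSpace Y]
    (e : X → Y) (he : IsEmbedding e) (hd : DenseRange e)
    (hps : IsPseudocompact Y) (hrem : IsCompact (Set.range e)ᶜ) :
    (∀ S Z : Set X, IsZeroSet S → IsZeroSet Z →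
        (∃ C : Set X, IsCozeroSet C ∧ IsPseudocompactSet (closure C) ∧ S ∩ Z ⊆ C) →
        closure (e '' S) ∩ closure (e '' Z) ⊆ Set.range e) ↔
    ∃ h : Y ≃ₜ zetaSet X, ∀ x : X, (h (e x) : StoneCech X) = stoneCechUnit x :=
  zetaSet_unique_pseudocompactification_general X Y e he hd hps hrem
end
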